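/- arXiv:2501.06130 — 6 statements merged into one kernel-verified Lean document; each statement's English description precedes it below -/
import Mathlib

section
/- For every feasible point of the nonconvex formulation in which at least one agent leaves the depot (i.e. Σ_{k ∈ V_agt} Σ_{e ∈ E_s^out} y_{e,k} ≥ 1), there exists a feasible point of the MICP formulation with the same objective value; it is obtained by aggregating over agents, i.e. setting y_e := Σ_k y_{e,k}, l_e := Σ_k l_{e,k}, l^{xy}_e := Σ_k l^{xy}_{e,k}, z_{e,p} := Σ_k z_{e,k,p}, z_{e,t} := Σ_k z_{e,k,t}, z′_{e,p} := Σ_k z′_{e,k,p}, z′_{e,t} := Σ_k z′_{e,k,t}, and α := Σ_k Σ_{e ∈ E_s^out} y_{e,k}. In particular the optimal value of the MICP formulation is at most the optimal value of the nonconvex formulation over such points. -/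
/-!
Aggregation over agents is linear, so each constraint of the nonconvex formulation sums to the
corresponding MICP constraint; the cone constraint survives by the triangle inequality
`‖∑ₖ lxyₖ‖ ≤ ∑ₖ ‖lxyₖ‖ ≤ ∑ₖ lₖ`.

The comparison of optimal values needs more, because `sInf ∅ = 0` for sets of reals: whenever
the MICP is feasible, so is the nonconvex formulation. A feasible MICP point is split among the
agents. Its active edges (`y = 1`) have in- and out-degree at most one at every segment node, so
they form depot-to-depot paths and cycles. Each edge receives the agent indexed by the depot edge
at which its chain of predecessors starts (there are `α ≤ m` such edges), and cycles all share
agent `0`. Each agent then leaves the depot at most once, and by conservation of its flow it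
also enters the depot copy at most once.
-/

open scoped BigOperators Classical

noncomputable section

/-- The Euclidean plane ℝ². -/
abbrev Plane := EuclideanSpace ℝ (Fin 2)

/-- Nodes of the graph: `Sum.inl i` is the segment node `i ∈ V_seg`,
`Sum.inr false` is the depot `s`, and `Sum.inr true` is the depot copy `s'`. -/
abbrev Node (ι : Type*) := ι ⊕ Bool

/-- The data of an MA-MT-TSP instance: a finite type `ι` of segment nodes, a finite
type `υ` of targets, a cluster assignment `cl` whose surjectivity expresses that every
cluster is nonempty, time windows `tlo i ≤ thi i`, start positions `pos`, velocities
`vel` (vanishing at the depot and its copy), a maximum speed `vmax > 0`, and a number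
of agents `m ≥ 1`. -/
structure MTData (ι υ : Type*) where
  cl : ι → υ
  cl_surj : Function.Surjective cl
  tlo : Node ι → ℝ
  thi : Node ι → ℝ
  tw : ∀ i, tlo i ≤ thi i
  pos : Node ι → Plane
  vel : Node ι → Plane
  vel_s : vel (Sum.inr false) = 0
  vel_s' : vel (Sum.inr true) = 0
  vmax : ℝ
  vmax_pos : 0 < vmax
  m : ℕ
  m_pos : 1 ≤ m

variable {ι υ : Type*} [Fintype ι] [Fintype υ]

/-- The edge relation: from the depot `s` to every segment node, between segment nodes
in different clusters, and from every segment node to the depot copy `s'`. -/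
def isEdge (D : MTData ι υ) : Node ι → Node ι → Prop
  | Sum.inr false, Sum.inl _ => True
  | Sum.inl i, Sum.inl j => D.cl i ≠ D.cl j
  | Sum.inl _, Sum.inr true => True
  | _, _ => False

/-- The edge set `E` as a finite set of ordered pairs of nodes. -/
def edges (D : MTData ι υ) : Finset (Node ι × Node ι) :=
  Finset.univ.filter fun e => isEdge D e.1 e.2

/-- `E_i^in`: the edges of `E` entering node `i`. -/
def inE (D : MTData ι υ) (i : Node ι) : Finset (Node ι × Node ι) :=
  (edges D).filter fun e => e.2 = i

/-- `E_i^out`: the edges of `E` exiting node `i`. -/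
def outE (D : MTData ι υ) (i : Node ι) : Finset (Node ι × Node ι) :=
  (edges D).filter fun e => e.1 = i

/-- A point of the nonconvex formulation: edge variables `y`, `l`, `lxy`, `zp`, `zt`,
`zp'`, `zt'` for each edge and agent, and node variables `t`, `p` for each node and
agent.  Agents are indexed by `Fin m`. -/
structure NCPoint (ι : Type*) (m : ℕ) where
  y : Node ι × Node ι → Fin m → ℝ
  l : Node ι × Node ι → Fin m → ℝ
  lxy : Node ι × Node ι → Fin m → Plane
  zp : Node ι × Node ι → Fin m → Plane
  zt : Node ι × Node ι → Fin m → ℝ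
  zp' : Node ι × Node ι → Fin m → Plane
  zt' : Node ι × Node ι → Fin m → ℝ
  t : Node ι → Fin m → ℝ
  p : Node ι → Fin m → Plane

variable {ι υ : Type*} [Fintype ι] [Fintype υ]

/-- Feasibility for the nonconvex formulation. -/
def NCFeas (D : MTData ι υ) (P : NCPoint ι D.m) : Prop :=
  (∀ e ∈ edges D, ∀ k, P.y e k = 0 ∨ P.y e k = 1) ∧
  (∀ e ∈ edges D, ∀ k, 0 ≤ P.l e k) ∧
  (∀ k, ∑ e ∈ outE D (Sum.inr false), P.y e k ≤ 1) ∧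
  (∀ k, ∑ e ∈ inE D (Sum.inr true), P.y e k ≤ 1) ∧
  (∀ u : υ, ∑ k, ∑ i ∈ Finset.univ.filter (fun i => D.cl i = u),
      ∑ e ∈ inE D (Sum.inl i), P.y e k = 1) ∧
  (∀ i : ι, ∀ k, ∑ e ∈ inE D (Sum.inl i), P.y e k = ∑ e ∈ outE D (Sum.inl i), P.y e k) ∧
  (∀ i : Node ι, ∀ k, D.tlo i ≤ P.t i k ∧ P.t i k ≤ D.thi i) ∧
  (∀ i : Node ι, ∀ k, P.p i k = D.pos i + (P.t i k - D.tlo i) • D.vel i) ∧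
  (∀ e ∈ edges D, ∀ k,
    P.zp e k = P.y e k • P.p e.1 k ∧
    P.zt e k = P.y e k * P.t e.1 k ∧
    P.zp' e k = P.y e k • P.p e.2 k ∧
    P.zt' e k = P.y e k * P.t e.2 k ∧
    P.l e k ≤ D.vmax * (P.zt' e k - P.zt e k) ∧
    P.lxy e k = P.zp' e k - P.zp e k ∧
    ‖P.lxy e k‖ ^ 2 ≤ P.l e k ^ 2)

/-- Objective of the nonconvex formulation. -/
def NCObj (D : MTData ι υ) (P : NCPoint ι D.m) : ℝ :=
  ∑ k, ∑ e ∈ edges D, P.l e k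

/-- A point of the MICP formulation: a single set of edge variables, together with the
integer depot flow `α` (stated as a real number required to be integral). -/
structure MICPPoint (ι : Type*) where
  y : Node ι × Node ι → ℝ
  l : Node ι × Node ι → ℝ
  lxy : Node ι × Node ι → Plane
  zp : Node ι × Node ι → Plane
  zt : Node ι × Node ι → ℝ
  zp' : Node ι × Node ι → Plane
  zt' : Node ι × Node ι → ℝ
  α : ℝ

/-- Feasibility for the MICP formulation. -/
def MICPFeas (D : MTData ι υ) (Q : MICPPoint ι) : Prop :=
  (∀ e ∈ edges D, Q.y e = 0 ∨ Q.y e = 1) ∧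
  (∀ e ∈ edges D, 0 ≤ Q.l e) ∧
  (∃ n : ℤ, Q.α = n) ∧ (1 ≤ Q.α) ∧ (Q.α ≤ (D.m : ℝ)) ∧
  (∑ e ∈ outE D (Sum.inr false), Q.y e = Q.α) ∧
  (∑ e ∈ inE D (Sum.inr true), Q.y e = Q.α) ∧
  (∀ u : υ, ∑ i ∈ Finset.univ.filter (fun i => D.cl i = u),
      ∑ e ∈ inE D (Sum.inl i), Q.y e = 1) ∧
  (∀ i : ι, ∑ e ∈ inE D (Sum.inl i), Q.y e = ∑ e ∈ outE D (Sum.inl i), Q.y e) ∧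
  (∀ i : ι, ∑ e ∈ inE D (Sum.inl i), Q.zt' e = ∑ e ∈ outE D (Sum.inl i), Q.zt e) ∧
  (∀ e ∈ edges D,
    Q.y e * D.tlo e.1 ≤ Q.zt e ∧ Q.zt e ≤ Q.y e * D.thi e.1 ∧
    Q.y e * D.tlo e.2 ≤ Q.zt' e ∧ Q.zt' e ≤ Q.y e * D.thi e.2 ∧
    Q.zp e = Q.zt e • D.vel e.1 + Q.y e • (D.pos e.1 - D.tlo e.1 • D.vel e.1) ∧
    Q.zp' e = Q.zt' e • D.vel e.2 + Q.y e • (D.pos e.2 - D.tlo e.2 • D.vel e.2) ∧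
    Q.l e ≤ D.vmax * (Q.zt' e - Q.zt e) ∧
    Q.lxy e = Q.zp' e - Q.zp e ∧
    ‖Q.lxy e‖ ^ 2 ≤ Q.l e ^ 2)

/-- Objective of the MICP formulation. -/
def MICPObj (D : MTData ι υ) (Q : MICPPoint ι) : ℝ :=
  ∑ e ∈ edges D, Q.l e

/-- The MICP point obtained from a point of the nonconvex formulation by aggregating
(summing) all edge variables over the agents, with `α` the total flow out of the
depot. -/
def aggregate (D : MTData ι υ) (P : NCPoint ι D.m) : MICPPoint ι where
  y e := ∑ k, P.y e k
  l e := ∑ k, P.l e k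
  lxy e := ∑ k, P.lxy e k
  zp e := ∑ k, P.zp e k
  zt e := ∑ k, P.zt e k
  zp' e := ∑ k, P.zp' e k
  zt' e := ∑ k, P.zt' e k
  α := ∑ k, ∑ e ∈ outE D (Sum.inr false), P.y e k

open Finset

lemma Finset.sum_eq_card_filter_eq_one {α : Type*} {s : Finset α} {g : α → ℝ}
    (h : ∀ a ∈ s, g a = 0 ∨ g a = 1) : ∑ a ∈ s, g a = #(s.filter (g · = 1)) := by
  rw [← sum_boole]
  refine sum_congr rfl fun a ha => ?_
  rcases h a ha with h | h <;> simp [h]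

lemma Finset.sum_eq_zero_or_one_of_le_one {α : Type*} {s : Finset α} {g : α → ℝ}
    (h : ∀ a ∈ s, g a = 0 ∨ g a = 1) (hle : ∑ a ∈ s, g a ≤ 1) :
    ∑ a ∈ s, g a = 0 ∨ ∑ a ∈ s, g a = 1 := by
  rw [sum_eq_card_filter_eq_one h] at hle ⊢
  have : #(s.filter (g · = 1)) ≤ 1 := by exact_mod_cast hle
  interval_cases #(s.filter (g · = 1)) <;> simp

lemma sq_norm_sum_le_sq_sum {α E : Type*} [SeminormedAddCommGroup E] {s : Finset α}
    {x : α → E} {l : α → ℝ} (hl : ∀ a ∈ s, 0 ≤ l a)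
    (hx : ∀ a ∈ s, ‖x a‖ ^ 2 ≤ l a ^ 2) :
    ‖∑ a ∈ s, x a‖ ^ 2 ≤ (∑ a ∈ s, l a) ^ 2 := by
  have hnorm : ‖∑ a ∈ s, x a‖ ≤ ∑ a ∈ s, l a :=
    (norm_sum_le s x).trans <| sum_le_sum fun a ha =>
      (sq_le_sq₀ (norm_nonneg _) (hl a ha)).1 (hx a ha)
  exact pow_le_pow_left₀ (norm_nonneg _) hnorm 2

lemma Finset.sum_mul_const_le_sum_mul {α : Type*} {s : Finset α} {w t : α → ℝ} {a : ℝ}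
    (hw : ∀ k ∈ s, 0 ≤ w k) (ht : ∀ k ∈ s, a ≤ t k) :
    (∑ k ∈ s, w k) * a ≤ ∑ k ∈ s, w k * t k := by
  rw [sum_mul]
  exact sum_le_sum fun k hk => mul_le_mul_of_nonneg_left (ht k hk) (hw k hk)

lemma Finset.sum_mul_le_sum_mul_const {α : Type*} {s : Finset α} {w t : α → ℝ} {b : ℝ}
    (hw : ∀ k ∈ s, 0 ≤ w k) (ht : ∀ k ∈ s, t k ≤ b) :
    ∑ k ∈ s, w k * t k ≤ (∑ k ∈ s, w k) * b := by
  rw [sum_mul]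
  exact sum_le_sum fun k hk => mul_le_mul_of_nonneg_left (ht k hk) (hw k hk)

lemma Finset.sum_smul_affine {α E : Type*} [AddCommGroup E] [Module ℝ E] (s : Finset α)
    (w t : α → ℝ) (x v : E) (a : ℝ) :
    ∑ k ∈ s, w k • (x + (t k - a) • v)
      = (∑ k ∈ s, w k * t k) • v + (∑ k ∈ s, w k) • (x - a • v) := by
  rw [sum_smul, sum_smul, ← sum_add_distrib]
  exact sum_congr rfl fun k _ => by module

theorem csInf_le_csInf_of_nonempty_imp {α : Type*} [ConditionallyCompleteLattice α]
    {A B : Set α} (hA : BddBelow A) (hBA : B ⊆ A) (hne : A.Nonempty → B.Nonempty) :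
    sInf A ≤ sInf B := by
  rcases B.eq_empty_or_nonempty with hB | hB
  · rw [Set.not_nonempty_iff_eq_empty.1 fun h => (hne h).ne_empty hB, hB]
  · exact csInf_le_csInf hA hB hBA

section OrbitLabel

variable {α β : Type*} (f : α → α) (T : Set α)

def orbitHits (a : α) : Set α := {t ∈ T | ∃ j, f^[j] a = t}

def orbitLabel (g : α → β) (b₀ : β) (a : α) : β :=
  if h : (orbitHits f T a).Nonempty then g h.some else b₀

variable {f T}

lemma orbitHits_apply {a : α} (ha : a ∉ T) : orbitHits f T (f a) = orbitHits f T a := by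
  ext t
  simp only [orbitHits, Set.mem_ofPred_eq, ← Function.iterate_succ_apply]
  refine and_congr_right fun ht => ⟨fun ⟨j, hj⟩ => ⟨j + 1, hj⟩, ?_⟩
  rintro ⟨_ | j, rfl⟩
  · exact absurd ht ha
  · exact ⟨j, rfl⟩

lemma orbitHits_of_mem (hfix : ∀ t ∈ T, f t = t) {t : α} (ht : t ∈ T) :
    orbitHits f T t = {t} := by
  ext t'
  simp only [orbitHits, Function.iterate_fixed (hfix t ht), exists_const, Set.mem_ofPred_eq,
    Set.mem_singleton_iff]
  exact ⟨fun h => h.2.symm, fun h => ⟨h ▸ ht, h.symm⟩⟩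

lemma orbitLabel_apply {g : α → β} {b₀ : β} {a : α} (ha : a ∉ T) :
    orbitLabel f T g b₀ (f a) = orbitLabel f T g b₀ a := by
  simp only [orbitLabel, orbitHits_apply ha]

lemma orbitLabel_of_mem {g : α → β} {b₀ : β} (hfix : ∀ t ∈ T, f t = t) {t : α}
    (ht : t ∈ T) :
    orbitLabel f T g b₀ t = g t := by
  have hhits := orbitHits_of_mem hfix ht
  have hne : (orbitHits f T t).Nonempty := hhits ▸ Set.singleton_nonempty t
  have hsome : hne.some = t := by simpa only [hhits, Set.mem_singleton_iff] using hne.some_mem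
  rw [orbitLabel, dif_pos hne, hsome]

end OrbitLabel

section Graph

variable {ι υ : Type*} [Fintype ι] {D : MTData ι υ} {e : Node ι × Node ι}

lemma mem_edges : e ∈ edges D ↔ isEdge D e.1 e.2 := by simp [edges]

lemma mem_inE {j : Node ι} : e ∈ inE D j ↔ e ∈ edges D ∧ e.2 = j := mem_filter

lemma mem_outE {j : Node ι} : e ∈ outE D j ↔ e ∈ edges D ∧ e.1 = j := mem_filter

lemma inE_subset_edges (j : Node ι) : inE D j ⊆ edges D := filter_subset _ _

lemma outE_subset_edges (j : Node ι) : outE D j ⊆ edges D := filter_subset _ _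

lemma inE_depot_eq_empty : inE D (Sum.inr false) = ∅ := by
  ext ⟨a, b⟩
  rcases a with _ | _ | _ <;> rcases b with _ | _ | _ <;> simp [mem_inE, mem_edges, isEdge]

lemma outE_depotCopy_eq_empty : outE D (Sum.inr true) = ∅ := by
  ext ⟨a, b⟩
  rcases a with _ | _ | _ <;> rcases b with _ | _ | _ <;> simp [mem_outE, mem_edges, isEdge]

lemma exists_segment_endpoint (he : e ∈ edges D) :
    ∃ i : ι, e.2 = Sum.inl i ∨ e.1 = Sum.inl i := by
  obtain ⟨a, b⟩ := e
  rcases a with i | _ | _ <;> rcases b with j | _ | _ <;> simp_all [mem_edges, isEdge]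

lemma sum_edges_eq_sum_inE (g : Node ι × Node ι → ℝ) :
    ∑ e ∈ edges D, g e = ∑ j, ∑ e ∈ inE D j, g e :=
  (sum_fiberwise (edges D) Prod.snd g).symm

lemma sum_edges_eq_sum_outE (g : Node ι × Node ι → ℝ) :
    ∑ e ∈ edges D, g e = ∑ j, ∑ e ∈ outE D j, g e :=
  (sum_fiberwise (edges D) Prod.fst g).symm

lemma sum_inE_depotCopy_eq_sum_outE_depot (g : Node ι × Node ι → ℝ)
    (hg : ∀ i : ι, ∑ e ∈ inE D (Sum.inl i), g e = ∑ e ∈ outE D (Sum.inl i), g e) :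
    ∑ e ∈ inE D (Sum.inr true), g e = ∑ e ∈ outE D (Sum.inr false), g e := by
  have h := (sum_edges_eq_sum_inE (D := D) g).symm.trans (sum_edges_eq_sum_outE g)
  simp only [Fintype.sum_sum_type, Fintype.sum_bool, inE_depot_eq_empty,
    outE_depotCopy_eq_empty, sum_empty, sum_congr rfl fun i _ => hg i] at h
  linarith

end Graph

section Aggregate

variable {ι υ : Type*} [Fintype ι] {D : MTData ι υ} {P : NCPoint ι D.m}
  {e : Node ι × Node ι}

namespace NCFeas

lemma y_nonneg (hP : NCFeas D P) (he : e ∈ edges D) (k : Fin D.m) : 0 ≤ P.y e k := by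
  rcases hP.1 e he k with h | h <;> simp [h]

lemma sum_sum_inE_y_le_one (hP : NCFeas D P) (i : ι) :
    ∑ k, ∑ e ∈ inE D (Sum.inl i), P.y e k ≤ 1 := by
  calc ∑ k, ∑ e ∈ inE D (Sum.inl i), P.y e k
      ≤ ∑ k, ∑ i' ∈ univ.filter (fun i' => D.cl i' = D.cl i),
          ∑ e ∈ inE D (Sum.inl i'), P.y e k :=
        sum_le_sum fun k _ => single_le_sum (f := fun i' => ∑ e ∈ inE D (Sum.inl i'), P.y e k)
          (fun i' _ => sum_nonneg fun e he => hP.y_nonneg (inE_subset_edges _ he) k)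
          (mem_filter.2 ⟨mem_univ _, rfl⟩)
    _ = 1 := hP.2.2.2.2.1 (D.cl i)

lemma sum_y_le_one (hP : NCFeas D P) (he : e ∈ edges D) : ∑ k, P.y e k ≤ 1 := by
  have hterm {j : Node ι} {A : Node ι → Finset (Node ι × Node ι)} (hA : A j ⊆ edges D)
      (heA : e ∈ A j) : ∑ k, P.y e k ≤ ∑ k, ∑ e' ∈ A j, P.y e' k :=
    sum_le_sum fun k _ => single_le_sum (fun e' he' => hP.y_nonneg (hA he') k) heA
  obtain ⟨i, hi | hi⟩ := exists_segment_endpoint he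
  · exact (hterm (inE_subset_edges _) (mem_inE.2 ⟨he, hi⟩)).trans (hP.sum_sum_inE_y_le_one i)
  · calc ∑ k, P.y e k ≤ ∑ k, ∑ e' ∈ outE D (Sum.inl i), P.y e' k :=
          hterm (outE_subset_edges _) (mem_outE.2 ⟨he, hi⟩)
      _ = ∑ k, ∑ e' ∈ inE D (Sum.inl i), P.y e' k :=
          sum_congr rfl fun k _ => (hP.2.2.2.2.2.1 i k).symm
      _ ≤ 1 := hP.sum_sum_inE_y_le_one i

lemma exists_int_eq_depotFlow (hP : NCFeas D P) :
    ∃ n : ℤ, ∑ k, ∑ e ∈ outE D (Sum.inr false), P.y e k = n := by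
  refine ⟨∑ k, #((outE D (Sum.inr false)).filter (P.y · k = 1)), ?_⟩
  push_cast
  exact sum_congr rfl fun k _ =>
    sum_eq_card_filter_eq_one fun e he => hP.1 e (outE_subset_edges _ he) k

lemma sum_inE_zt'_eq_sum_outE_zt (hP : NCFeas D P) (i : ι) (k : Fin D.m) :
    ∑ e ∈ inE D (Sum.inl i), P.zt' e k = ∑ e ∈ outE D (Sum.inl i), P.zt e k := by
  obtain ⟨-, -, -, -, -, hcons, -, -, hedge⟩ := hP
  calc ∑ e ∈ inE D (Sum.inl i), P.zt' e k
      = (∑ e ∈ inE D (Sum.inl i), P.y e k) * P.t (Sum.inl i) k := by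
        rw [sum_mul]
        refine sum_congr rfl fun e he => ?_
        rw [(hedge e (inE_subset_edges _ he) k).2.2.2.1, (mem_inE.1 he).2]
    _ = (∑ e ∈ outE D (Sum.inl i), P.y e k) * P.t (Sum.inl i) k := by rw [hcons i k]
    _ = ∑ e ∈ outE D (Sum.inl i), P.zt e k := by
        rw [sum_mul]
        refine sum_congr rfl fun e he => ?_
        rw [(hedge e (outE_subset_edges _ he) k).2.1, (mem_outE.1 he).2]

end NCFeas

theorem micpFeas_aggregate (hP : NCFeas D P)
    (hflow : 1 ≤ ∑ k, ∑ e ∈ outE D (Sum.inr false), P.y e k) :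
    MICPFeas D (aggregate D P) := by
  have ⟨hy, hl, hdep, _, hclu, hcons, ht, hpos, hedge⟩ := hP
  unfold MICPFeas
  dsimp only [aggregate]
  refine ⟨fun e he => sum_eq_zero_or_one_of_le_one (fun k _ => hy e he k) (hP.sum_y_le_one he),
    fun e he => sum_nonneg fun k _ => hl e he k, hP.exists_int_eq_depotFlow, hflow,
    ?_, sum_comm, ?_, ?_, ?_, ?_, ?_⟩
  · exact (sum_le_sum fun k _ => hdep k).trans (by simp)
  · refine sum_comm.trans (sum_congr rfl fun k _ => ?_)
    exact sum_inE_depotCopy_eq_sum_outE_depot (P.y · k) fun i => hcons i k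
  · intro u
    rw [← hclu u, sum_comm]
    exact sum_congr rfl fun i _ => sum_comm
  · intro i
    rw [sum_comm, sum_comm (s := outE D _)]
    exact sum_congr rfl fun k _ => hcons i k
  · intro i
    rw [sum_comm, sum_comm (s := outE D _)]
    exact sum_congr rfl fun k _ => hP.sum_inE_zt'_eq_sum_outE_zt i k
  · intro e he
    have hyk := fun k (_ : k ∈ univ) => hP.y_nonneg he k
    simp only [fun k => (hedge e he k).2.1, fun k => (hedge e he k).2.2.2.1]
    refine ⟨sum_mul_const_le_sum_mul hyk fun k _ => (ht e.1 k).1,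
      sum_mul_le_sum_mul_const hyk fun k _ => (ht e.1 k).2,
      sum_mul_const_le_sum_mul hyk fun k _ => (ht e.2 k).1,
      sum_mul_le_sum_mul_const hyk fun k _ => (ht e.2 k).2,
      by simp only [fun k => (hedge e he k).1, hpos, sum_smul_affine],
      by simp only [fun k => (hedge e he k).2.2.1, hpos, sum_smul_affine], ?_, ?_, ?_⟩
    · rw [← sum_sub_distrib, mul_sum]
      exact sum_le_sum fun k _ => by simpa only [(hedge e he k).2.1, (hedge e he k).2.2.2.1]
        using (hedge e he k).2.2.2.2.1
    · rw [← sum_sub_distrib]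
      exact sum_congr rfl fun k _ => (hedge e he k).2.2.2.2.2.1
    · exact sq_norm_sum_le_sq_sum (fun k _ => hl e he k)
        fun k _ => (hedge e he k).2.2.2.2.2.2

theorem micpObj_aggregate (P : NCPoint ι D.m) : MICPObj D (aggregate D P) = NCObj D P := by
  simp only [MICPObj, NCObj, aggregate]
  exact sum_comm

end Aggregate

section Split

variable {ι υ : Type*} [Fintype ι] {D : MTData ι υ} {Q : MICPPoint ι}
  {e p q : Node ι × Node ι}

def activeIn (D : MTData ι υ) (Q : MICPPoint ι) (j : Node ι) : Finset (Node ι × Node ι) :=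
  (inE D j).filter (Q.y · = 1)

def activeOut (D : MTData ι υ) (Q : MICPPoint ι) (j : Node ι) : Finset (Node ι × Node ι) :=
  (outE D j).filter (Q.y · = 1)

lemma mem_activeIn {j : Node ι} :
    e ∈ activeIn D Q j ↔ e ∈ edges D ∧ e.2 = j ∧ Q.y e = 1 := by
  simp [activeIn, mem_inE, and_assoc]

lemma mem_activeOut {j : Node ι} :
    e ∈ activeOut D Q j ↔ e ∈ edges D ∧ e.1 = j ∧ Q.y e = 1 := by
  simp [activeOut, mem_outE, and_assoc]

lemma activeIn_depot_eq_empty : activeIn D Q (Sum.inr false) = ∅ := by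
  simp [activeIn, inE_depot_eq_empty]

lemma activeOut_depotCopy_eq_empty : activeOut D Q (Sum.inr true) = ∅ := by
  simp [activeOut, outE_depotCopy_eq_empty]

namespace MICPFeas

lemma y_nonneg (hQ : MICPFeas D Q) (he : e ∈ edges D) : 0 ≤ Q.y e := by
  rcases hQ.1 e he with h | h <;> simp [h]

lemma zt_eq_zero_of_y_ne_one (hQ : MICPFeas D Q) (he : e ∈ edges D) (hy : Q.y e ≠ 1) :
    Q.zt e = 0 ∧ Q.zt' e = 0 := by
  have hy0 : Q.y e = 0 := (hQ.1 e he).resolve_right hy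
  obtain ⟨h1, h2, h3, h4, -⟩ := hQ.2.2.2.2.2.2.2.2.2.2 e he
  simp only [hy0, zero_mul] at h1 h2 h3 h4
  exact ⟨le_antisymm h2 h1, le_antisymm h4 h3⟩

lemma sum_inE_y_eq_card_activeIn (hQ : MICPFeas D Q) (j : Node ι) :
    ∑ e ∈ inE D j, Q.y e = #(activeIn D Q j) :=
  sum_eq_card_filter_eq_one fun e he => hQ.1 e (inE_subset_edges _ he)

lemma sum_outE_y_eq_card_activeOut (hQ : MICPFeas D Q) (j : Node ι) :
    ∑ e ∈ outE D j, Q.y e = #(activeOut D Q j) :=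
  sum_eq_card_filter_eq_one fun e he => hQ.1 e (outE_subset_edges _ he)

lemma card_activeIn_le_one (hQ : MICPFeas D Q) (i : ι) : #(activeIn D Q (Sum.inl i)) ≤ 1 := by
  have hclu := hQ.2.2.2.2.2.2.2.1 (D.cl i)
  have : (#(activeIn D Q (Sum.inl i)) : ℝ) ≤ 1 := by
    rw [← hQ.sum_inE_y_eq_card_activeIn, ← hclu]
    exact single_le_sum (f := fun i' => ∑ e ∈ inE D (Sum.inl i'), Q.y e)
      (fun i' _ => sum_nonneg fun e he => hQ.y_nonneg (inE_subset_edges _ he))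
      (mem_filter.2 ⟨mem_univ _, rfl⟩)
  exact_mod_cast this

lemma card_activeIn_eq_card_activeOut (hQ : MICPFeas D Q) (i : ι) :
    #(activeIn D Q (Sum.inl i)) = #(activeOut D Q (Sum.inl i)) := by
  have hcons := hQ.2.2.2.2.2.2.2.2.1 i
  rw [hQ.sum_inE_y_eq_card_activeIn, hQ.sum_outE_y_eq_card_activeOut] at hcons
  exact_mod_cast hcons

lemma activeIn_activeOut_segment (hQ : MICPFeas D Q) (i : ι) :
    (activeIn D Q (Sum.inl i) = ∅ ∧ activeOut D Q (Sum.inl i) = ∅) ∨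
      ∃ p q, activeIn D Q (Sum.inl i) = {p} ∧ activeOut D Q (Sum.inl i) = {q} := by
  have hle := hQ.card_activeIn_le_one i
  have heq := hQ.card_activeIn_eq_card_activeOut i
  interval_cases h : #(activeIn D Q (Sum.inl i))
  · exact Or.inl ⟨card_eq_zero.1 h, card_eq_zero.1 heq.symm⟩
  · obtain ⟨p, hp⟩ := card_eq_one.1 h
    obtain ⟨q, hq⟩ := card_eq_one.1 heq.symm
    exact Or.inr ⟨p, q, hp, hq⟩

lemma zt'_eq_zt (hQ : MICPFeas D Q) {i : ι} (hp : p ∈ activeIn D Q (Sum.inl i))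
    (hq : q ∈ activeOut D Q (Sum.inl i)) : Q.zt' p = Q.zt q := by
  have hactive {A : Finset (Node ι × Node ι)} (hA : A ⊆ edges D)
      (g : Node ι × Node ι → ℝ) (hg : ∀ e ∈ edges D, Q.y e ≠ 1 → g e = 0) :
      ∑ e ∈ A.filter (Q.y · = 1), g e = ∑ e ∈ A, g e :=
    sum_filter_of_ne fun e he => not_imp_comm.1 (hg e (hA he))
  rcases hQ.activeIn_activeOut_segment i with ⟨hin, -⟩ | ⟨p', q', hin, hout⟩
  · simp [hin] at hp
  rw [hin, mem_singleton] at hp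
  rw [hout, mem_singleton] at hq
  subst hp hq
  calc Q.zt' p = ∑ e ∈ activeIn D Q (Sum.inl i), Q.zt' e := by rw [hin, sum_singleton]
    _ = ∑ e ∈ outE D (Sum.inl i), Q.zt e := by
      rw [← hQ.2.2.2.2.2.2.2.2.2.1 i]
      exact hactive (inE_subset_edges _) Q.zt'
        fun e he hy => (hQ.zt_eq_zero_of_y_ne_one he hy).2
    _ = ∑ e ∈ activeOut D Q (Sum.inl i), Q.zt e :=
      (hactive (outE_subset_edges _) Q.zt
        fun e he hy => (hQ.zt_eq_zero_of_y_ne_one he hy).1).symm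
    _ = Q.zt q := by rw [hout, sum_singleton]

end MICPFeas

structure IsAgentAssignment (D : MTData ι υ) (Q : MICPPoint ι)
    (κ : Node ι × Node ι → Fin D.m) : Prop where
  eq_of_segment : ∀ i : ι, ∀ p ∈ activeIn D Q (Sum.inl i),
    ∀ q ∈ activeOut D Q (Sum.inl i), κ p = κ q
  injOn_depot : Set.InjOn κ (activeOut D Q (Sum.inr false))

def predEdge (D : MTData ι υ) (Q : MICPPoint ι) (e : Node ι × Node ι) : Node ι × Node ι :=
  if h : (activeIn D Q e.1).Nonempty then h.choose else e

lemma predEdge_of_mem_activeIn (hQ : MICPFeas D Q) {i : ι} (hp : p ∈ activeIn D Q (Sum.inl i))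
    (hq : q ∈ activeOut D Q (Sum.inl i)) : predEdge D Q q = p := by
  have hq1 : q.1 = Sum.inl i := (mem_activeOut.1 hq).2.1
  have hne : (activeIn D Q q.1).Nonempty := hq1 ▸ ⟨p, hp⟩
  rw [predEdge, dif_pos hne]
  exact card_le_one.1 (hQ.card_activeIn_le_one i) _ (hq1 ▸ hne.choose_spec) _ hp

lemma predEdge_of_mem_activeOut_depot (he : e ∈ activeOut D Q (Sum.inr false)) :
    predEdge D Q e = e := by
  rw [predEdge, (mem_activeOut.1 he).2.1, activeIn_depot_eq_empty,
    dif_neg Finset.not_nonempty_empty]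

lemma MICPFeas.exists_isAgentAssignment (hQ : MICPFeas D Q) :
    ∃ κ, IsAgentAssignment D Q κ := by
  set T := activeOut D Q (Sum.inr false)
  have hT : #T ≤ D.m := by
    have h : (#T : ℝ) ≤ D.m := by
      rw [← hQ.sum_outE_y_eq_card_activeOut, hQ.2.2.2.2.2.1]
      exact hQ.2.2.2.2.1
    exact_mod_cast h
  let g : Node ι × Node ι → Fin D.m := fun e =>
    if h : e ∈ T then Fin.castLE hT (T.equivFin ⟨e, h⟩) else ⟨0, D.m_pos⟩
  have hg : Set.InjOn g T := by
    intro a ha b hb hab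
    simp only [g, dif_pos (mem_coe.1 ha), dif_pos (mem_coe.1 hb)] at hab
    exact congrArg Subtype.val (T.equivFin.injective (Fin.castLE_injective hT hab))
  have hfix : ∀ t ∈ (T : Set (Node ι × Node ι)), predEdge D Q t = t :=
    fun t ht => predEdge_of_mem_activeOut_depot ht
  refine ⟨orbitLabel (predEdge D Q) T g ⟨0, D.m_pos⟩, fun i p hp q hq => ?_, ?_⟩
  · have hqT : q ∉ (T : Set (Node ι × Node ι)) := fun h =>
      by simp [T, mem_activeOut.1 hq |>.2.1, mem_activeOut] at h
    rw [← orbitLabel_apply hqT, predEdge_of_mem_activeIn hQ hp hq]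
  · intro a ha b hb hab
    rw [orbitLabel_of_mem hfix ha, orbitLabel_of_mem hfix hb] at hab
    exact hg ha hb hab

def agentTime (D : MTData ι υ) (Q : MICPPoint ι) (κ : Node ι × Node ι → Fin D.m)
    (j : Node ι) (k : Fin D.m) : ℝ :=
  if h : ∃ e ∈ activeIn D Q j, κ e = k then Q.zt' h.choose
  else if h : ∃ e ∈ activeOut D Q j, κ e = k then Q.zt h.choose
  else D.tlo j

def splitByAgent (D : MTData ι υ) (Q : MICPPoint ι) (κ : Node ι × Node ι → Fin D.m) :
    NCPoint ι D.m where
  y e k := if κ e = k then Q.y e else 0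
  l e k := if κ e = k then Q.l e else 0
  lxy e k := if κ e = k then Q.lxy e else 0
  zp e k := if κ e = k then Q.zp e else 0
  zt e k := if κ e = k then Q.zt e else 0
  zp' e k := if κ e = k then Q.zp' e else 0
  zt' e k := if κ e = k then Q.zt' e else 0
  t j k := agentTime D Q κ j k
  p j k := D.pos j + (agentTime D Q κ j k - D.tlo j) • D.vel j

variable {κ : Node ι × Node ι → Fin D.m}

lemma sum_splitByAgent_y_eq_card (hQ : MICPFeas D Q) {A : Finset (Node ι × Node ι)}
    (hA : A ⊆ edges D) (k : Fin D.m) :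
    ∑ e ∈ A, (splitByAgent D Q κ).y e k = #((A.filter (Q.y · = 1)).filter (κ · = k)) := by
  have hbin (e) (he : e ∈ A) :
      (splitByAgent D Q κ).y e k = 0 ∨ (splitByAgent D Q κ).y e k = 1 := by
    by_cases hk : κ e = k <;> simp [splitByAgent, hk, hQ.1 e (hA he)]
  rw [sum_eq_card_filter_eq_one hbin]
  refine congrArg (fun s : Finset _ => (#s : ℝ)) (Finset.ext fun e => ?_)
  rw [mem_filter, mem_filter, mem_filter]
  by_cases hk : κ e = k <;> simp [splitByAgent, hk]

lemma sum_splitByAgent_y (e : Node ι × Node ι) : ∑ k, (splitByAgent D Q κ).y e k = Q.y e := by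
  simp [splitByAgent]

lemma agentTime_mem_Icc (hQ : MICPFeas D Q) (j : Node ι) (k : Fin D.m) :
    agentTime D Q κ j k ∈ Set.Icc (D.tlo j) (D.thi j) := by
  have hedge := hQ.2.2.2.2.2.2.2.2.2.2
  unfold agentTime
  split_ifs with hin hout
  · obtain ⟨he, hj, hy⟩ := mem_activeIn.1 hin.choose_spec.1
    obtain ⟨-, -, h1, h2, -⟩ := hedge _ he
    rw [hy, one_mul, hj] at h1 h2
    exact ⟨h1, h2⟩
  · obtain ⟨he, hj, hy⟩ := mem_activeOut.1 hout.choose_spec.1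
    obtain ⟨h1, h2, -⟩ := hedge _ he
    rw [hy, one_mul, hj] at h1 h2
    exact ⟨h1, h2⟩
  · exact ⟨le_rfl, D.tw j⟩

namespace IsAgentAssignment

lemma card_filter_activeIn_eq_card_filter_activeOut (hQ : MICPFeas D Q)
    (hκ : IsAgentAssignment D Q κ) (i : ι) (k : Fin D.m) :
    #((activeIn D Q (Sum.inl i)).filter (κ · = k))
      = #((activeOut D Q (Sum.inl i)).filter (κ · = k)) := by
  rcases hQ.activeIn_activeOut_segment i with ⟨hin, hout⟩ | ⟨p, q, hin, hout⟩
  · simp [hin, hout]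
  · have hpq := hκ.eq_of_segment i p (by simp [hin]) q (by simp [hout])
    by_cases hk : κ q = k <;> simp [hin, hout, filter_singleton, hpq, hk]

lemma sum_inE_splitByAgent_y_eq_sum_outE (hQ : MICPFeas D Q) (hκ : IsAgentAssignment D Q κ)
    (i : ι) (k : Fin D.m) :
    ∑ e ∈ inE D (Sum.inl i), (splitByAgent D Q κ).y e k
      = ∑ e ∈ outE D (Sum.inl i), (splitByAgent D Q κ).y e k := by
  rw [sum_splitByAgent_y_eq_card hQ (inE_subset_edges _),
    sum_splitByAgent_y_eq_card hQ (outE_subset_edges _)]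
  exact_mod_cast hκ.card_filter_activeIn_eq_card_filter_activeOut hQ i k

lemma card_filter_activeOut_le_one (hQ : MICPFeas D Q) (hκ : IsAgentAssignment D Q κ)
    (j : Node ι) (k : Fin D.m) :
    #((activeOut D Q j).filter (κ · = k)) ≤ 1 := by
  rcases j with i | _ | _
  · exact (card_filter_le _ _).trans
      (hQ.card_activeIn_eq_card_activeOut i ▸ hQ.card_activeIn_le_one i)
  · exact card_le_one.2 fun a ha b hb => hκ.injOn_depot (mem_filter.1 ha).1 (mem_filter.1 hb).1
      ((mem_filter.1 ha).2.trans (mem_filter.1 hb).2.symm)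
  · simp [activeOut_depotCopy_eq_empty]

lemma card_filter_activeIn_le_one (hQ : MICPFeas D Q) (hκ : IsAgentAssignment D Q κ)
    (j : Node ι) (k : Fin D.m) :
    #((activeIn D Q j).filter (κ · = k)) ≤ 1 := by
  rcases j with i | _ | _
  · exact (card_filter_le _ _).trans (hQ.card_activeIn_le_one i)
  · simp [activeIn_depot_eq_empty]
  · -- each agent's flow is conserved, so it enters the depot copy as often as it leaves the depot
    have hflow := sum_inE_depotCopy_eq_sum_outE_depot (D := D) _
      (hκ.sum_inE_splitByAgent_y_eq_sum_outE hQ · k)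
    rw [sum_splitByAgent_y_eq_card hQ (inE_subset_edges _),
      sum_splitByAgent_y_eq_card hQ (outE_subset_edges _)] at hflow
    have hout := hκ.card_filter_activeOut_le_one hQ (Sum.inr false) k
    exact (Nat.cast_inj.1 hflow).le.trans hout

lemma agentTime_of_mem_activeIn (hQ : MICPFeas D Q) (hκ : IsAgentAssignment D Q κ)
    {j : Node ι} (he : e ∈ activeIn D Q j) : agentTime D Q κ j (κ e) = Q.zt' e := by
  have hex : ∃ e' ∈ activeIn D Q j, κ e' = κ e := ⟨e, he, rfl⟩
  rw [agentTime, dif_pos hex, card_le_one.1 (hκ.card_filter_activeIn_le_one hQ j (κ e))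
    _ (mem_filter.2 hex.choose_spec) e (mem_filter.2 ⟨he, rfl⟩)]

lemma agentTime_of_mem_activeOut (hQ : MICPFeas D Q) (hκ : IsAgentAssignment D Q κ)
    {j : Node ι} (he : e ∈ activeOut D Q j) : agentTime D Q κ j (κ e) = Q.zt e := by
  rcases j with i | _ | _
  · obtain ⟨p, hp⟩ : (activeIn D Q (Sum.inl i)).Nonempty := by
      rw [← card_pos, hQ.card_activeIn_eq_card_activeOut i]
      exact card_pos.2 ⟨e, he⟩
    rw [← hκ.eq_of_segment i p hp e he, hκ.agentTime_of_mem_activeIn hQ hp, hQ.zt'_eq_zt hp he]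
  · have hex : ∃ e' ∈ activeOut D Q (Sum.inr false), κ e' = κ e := ⟨e, he, rfl⟩
    rw [agentTime, dif_neg (by simp [activeIn_depot_eq_empty]), dif_pos hex,
      hκ.injOn_depot (mem_coe.2 hex.choose_spec.1) (mem_coe.2 he) hex.choose_spec.2]
  · simp [activeOut_depotCopy_eq_empty] at he

lemma zt_eq_y_mul_agentTime (hQ : MICPFeas D Q) (hκ : IsAgentAssignment D Q κ)
    (he : e ∈ edges D) :
    Q.zt e = Q.y e * agentTime D Q κ e.1 (κ e) ∧
      Q.zt' e = Q.y e * agentTime D Q κ e.2 (κ e) := by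
  by_cases hy : Q.y e = 1
  · rw [hy, one_mul, one_mul,
      hκ.agentTime_of_mem_activeOut hQ (mem_activeOut.2 ⟨he, rfl, hy⟩),
      hκ.agentTime_of_mem_activeIn hQ (mem_activeIn.2 ⟨he, rfl, hy⟩)]
    exact ⟨rfl, rfl⟩
  · rw [(hQ.1 e he).resolve_right hy, zero_mul, zero_mul]
    exact hQ.zt_eq_zero_of_y_ne_one he hy

theorem ncFeas_splitByAgent (hQ : MICPFeas D Q) (hκ : IsAgentAssignment D Q κ) :
    NCFeas D (splitByAgent D Q κ) := by
  have ⟨hy, hl, _, _, _, _, _, hclu, _, _, hedge⟩ := hQ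
  refine ⟨fun e he k => ?_, fun e he k => ?_, fun k => ?_, fun k => ?_, fun u => ?_,
    hκ.sum_inE_splitByAgent_y_eq_sum_outE hQ, fun j k => agentTime_mem_Icc hQ j k,
    fun _ _ => rfl, fun e he k => ?_⟩
  · by_cases hk : κ e = k <;> simp [splitByAgent, hk, hy e he]
  · by_cases hk : κ e = k <;> simp [splitByAgent, hk, hl e he]
  · rw [sum_splitByAgent_y_eq_card hQ (outE_subset_edges _)]
    exact_mod_cast hκ.card_filter_activeOut_le_one hQ _ k
  · rw [sum_splitByAgent_y_eq_card hQ (inE_subset_edges _)]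
    exact_mod_cast hκ.card_filter_activeIn_le_one hQ _ k
  · rw [← hclu u, sum_comm]
    exact sum_congr rfl fun i _ => by rw [sum_comm]; simp only [sum_splitByAgent_y]
  · by_cases hk : κ e = k
    · subst hk
      obtain ⟨hzt, hzt'⟩ := hκ.zt_eq_y_mul_agentTime hQ he
      obtain ⟨-, -, -, -, hzp, hzp', hlt, hlxy, hnorm⟩ := hedge e he
      simp only [splitByAgent, ↓reduceIte]
      refine ⟨?_, hzt, ?_, hzt', hlt, hlxy, hnorm⟩
      · rw [hzp, hzt]; module
      · rw [hzp', hzt']; module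
    · simp [splitByAgent, hk]

end IsAgentAssignment

lemma sum_depotFlow_splitByAgent (hQ : MICPFeas D Q) :
    ∑ k, ∑ e ∈ outE D (Sum.inr false), (splitByAgent D Q κ).y e k = Q.α := by
  rw [sum_comm, ← hQ.2.2.2.2.2.1]
  exact sum_congr rfl fun e _ => sum_splitByAgent_y e

theorem MICPFeas.exists_ncFeas (hQ : MICPFeas D Q) :
    ∃ P : NCPoint ι D.m, NCFeas D P ∧
      1 ≤ ∑ k, ∑ e ∈ outE D (Sum.inr false), P.y e k := by
  obtain ⟨κ, hκ⟩ := hQ.exists_isAgentAssignment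
  exact ⟨splitByAgent D Q κ, hκ.ncFeas_splitByAgent hQ,
    (sum_depotFlow_splitByAgent hQ).symm ▸ hQ.2.2.2.1⟩

end Split

theorem aggregate_feasible_same_objective_general
    {ι υ : Type*} [Fintype ι] (D : MTData ι υ) :
    (∀ P : NCPoint ι D.m, NCFeas D P →
      1 ≤ ∑ k, ∑ e ∈ outE D (Sum.inr false), P.y e k →
      MICPFeas D (aggregate D P) ∧ MICPObj D (aggregate D P) = NCObj D P) ∧
    sInf {c : ℝ | ∃ Q : MICPPoint ι, MICPFeas D Q ∧ MICPObj D Q = c} ≤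
      sInf {c : ℝ | ∃ P : NCPoint ι D.m, NCFeas D P ∧
        1 ≤ ∑ k, ∑ e ∈ outE D (Sum.inr false), P.y e k ∧ NCObj D P = c} := by
  refine ⟨fun P hP hflow => ⟨micpFeas_aggregate hP hflow, micpObj_aggregate P⟩,
    csInf_le_csInf_of_nonempty_imp ?_ ?_ ?_⟩
  · exact ⟨0, by rintro _ ⟨Q, hQ, rfl⟩; exact sum_nonneg hQ.2.1⟩
  · rintro _ ⟨P, hP, hflow, rfl⟩
    exact ⟨aggregate D P, micpFeas_aggregate hP hflow, micpObj_aggregate P⟩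
  · rintro ⟨_, Q, hQ, -⟩
    obtain ⟨P, hP, hflow⟩ := hQ.exists_ncFeas
    exact ⟨_, P, hP, hflow, rfl⟩

/-- For every feasible point of the nonconvex formulation in which at
least one agent leaves the depot, the point obtained by aggregating over agents is
feasible for the MICP formulation and has the same objective value.  In particular,
the optimal value of the MICP formulation is at most the optimal value of the
nonconvex formulation over such points. -/
theorem aggregate_feasible_same_objective
    {ι υ : Type*} [Fintype ι] [Fintype υ] (D : MTData ι υ) :
    (∀ P : NCPoint ι D.m, NCFeas D P →
      1 ≤ ∑ k, ∑ e ∈ outE D (Sum.inr false), P.y e k →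
      MICPFeas D (aggregate D P) ∧ MICPObj D (aggregate D P) = NCObj D P) ∧
    sInf {c : ℝ | ∃ Q : MICPPoint ι, MICPFeas D Q ∧ MICPObj D Q = c} ≤
      sInf {c : ℝ | ∃ P : NCPoint ι D.m, NCFeas D P ∧
        1 ≤ ∑ k, ∑ e ∈ outE D (Sum.inr false), P.y e k ∧ NCObj D P = c} :=
  aggregate_feasible_same_objective_general D
end
end

section
/- Perspective characterization of the MICP node constraints: fix a node i with time window t̲_i ≤ t̄_i, start position p̲_i ∈ ℝ², and velocity v_i ∈ ℝ², and set X_i = {(p, t) ∈ ℝ² × ℝ : t̲_i ≤ t ≤ t̄_i and p = p̲_i + (t − t̲_i)·v_i}. Then for every y ∈ {0,1}, z_p ∈ ℝ², and z_t ∈ ℝ, the constraints y·t̲_i ≤ z_t ≤ y·t̄_i and z_p = z_t·v_i + y·(p̲_i − t̲_i·v_i) hold if and only if there exists (p, t) ∈ X_i with z_p = y·p and z_t = y·t. -/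
/-!
For `y ≥ 0` the constraints cut out exactly the perspective `{(y • p, y * t) : (p, t) ∈ X_i}` of the
segment `X_i`, the key identity being
`y • (p̲ + (t - t̲) • v) = (y * t) • v + y • (p̲ - t̲ • v)`. For `y > 0` one divides by `y` and takes
`(p, t) = (y⁻¹ • z_p, z_t / y)`. For `y = 0` both sides reduce to `z_p = 0 ∧ z_t = 0`, the
right-hand side via any point of `X_i`, e.g. `(p̲, t̲)`, which lies in `X_i` because `t̲ ≤ t̄`.
-/

noncomputable section

section Perspective

variable {R 𝕜 E : Type*} [AddCommGroup E]

theorem smul_add_sub_smul_eq [Ring R] [Module R E] (y t tlo : R) (pbar v : E) :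
    y • (pbar + (t - tlo) • v) = (y * t) • v + y • (pbar - tlo • v) := by
  simp only [smul_add, smul_sub, sub_smul, smul_smul]
  abel

theorem perspective_constraints_of_mem [Ring R] [PartialOrder R] [IsOrderedRing R] [Module R E]
    {tlo thi y t : R} (hy : 0 ≤ y) (ht : tlo ≤ t ∧ t ≤ thi)
    (pbar v : E) :
    y * tlo ≤ y * t ∧ y * t ≤ y * thi ∧
      y • (pbar + (t - tlo) • v) = (y * t) • v + y • (pbar - tlo • v) :=
  ⟨mul_le_mul_of_nonneg_left ht.1 hy, mul_le_mul_of_nonneg_left ht.2 hy,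
    smul_add_sub_smul_eq y t tlo pbar v⟩

theorem exists_mem_of_perspective_constraints_of_pos [Field 𝕜] [LinearOrder 𝕜]
    [IsStrictOrderedRing 𝕜] [Module 𝕜 E] {tlo thi y zt : 𝕜} (hy : 0 < y)
    (hlo : y * tlo ≤ zt) (hhi : zt ≤ y * thi) {pbar v zp : E}
    (hzp : zp = zt • v + y • (pbar - tlo • v)) :
    ∃ (p : E) (t : 𝕜), (tlo ≤ t ∧ t ≤ thi ∧ p = pbar + (t - tlo) • v) ∧
      zp = y • p ∧ zt = y * t := by
  have hzt : zt = y * (zt / y) := (mul_div_cancel₀ zt hy.ne').symm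
  refine ⟨pbar + (zt / y - tlo) • v, zt / y, ⟨?_, ?_, rfl⟩, ?_, hzt⟩
  · rwa [le_div_iff₀ hy, mul_comm]
  · rwa [div_le_iff₀ hy, mul_comm]
  · rw [smul_add_sub_smul_eq, ← hzt, hzp]

theorem exists_mem_of_perspective_constraints_zero [Ring R] [PartialOrder R] [Module R E]
    {tlo thi zt : R} (htw : tlo ≤ thi)
    (hlo : 0 * tlo ≤ zt) (hhi : zt ≤ 0 * thi) {pbar v zp : E}
    (hzp : zp = zt • v + (0 : R) • (pbar - tlo • v)) :
    ∃ (p : E) (t : R), (tlo ≤ t ∧ t ≤ thi ∧ p = pbar + (t - tlo) • v) ∧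
      zp = (0 : R) • p ∧ zt = 0 * t := by
  have hzt : zt = 0 := by simp only [zero_mul] at hlo hhi; exact le_antisymm hhi hlo
  refine ⟨pbar, tlo, ⟨le_rfl, htw, by simp⟩, ?_, by simp [hzt]⟩
  simp [hzp, hzt]

theorem perspective_iff [Field 𝕜] [LinearOrder 𝕜] [IsStrictOrderedRing 𝕜] [Module 𝕜 E]
    {tlo thi : 𝕜} (htw : tlo ≤ thi) (pbar v : E) {y : 𝕜} (hy : 0 ≤ y)
    (zp : E) (zt : 𝕜) :
    (y * tlo ≤ zt ∧ zt ≤ y * thi ∧ zp = zt • v + y • (pbar - tlo • v)) ↔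
      ∃ (p : E) (t : 𝕜), (tlo ≤ t ∧ t ≤ thi ∧ p = pbar + (t - tlo) • v) ∧
        zp = y • p ∧ zt = y * t := by
  constructor
  · rintro ⟨hlo, hhi, hzp⟩
    rcases hy.eq_or_lt with rfl | hpos
    · exact exists_mem_of_perspective_constraints_zero htw hlo hhi hzp
    · exact exists_mem_of_perspective_constraints_of_pos hpos hlo hhi hzp
  · rintro ⟨p, t, ⟨htlo, hthi, rfl⟩, rfl, rfl⟩
    exact perspective_constraints_of_mem hy ⟨htlo, hthi⟩ pbar v

end Perspective

/-- **perspective characterization of the MICP node constraints.**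
For a node with time window `tlo ≤ thi`, start position `pbar` and velocity `v`, and
for any `y ∈ {0,1}`, `z_p ∈ ℝ²`, `z_t ∈ ℝ`, the constraints
`y·tlo ≤ z_t ≤ y·thi` and `z_p = z_t·v + y·(pbar − tlo·v)` hold if and only if there
exists `(p, t) ∈ X_i` with `z_p = y·p` and `z_t = y·t`, where
`X_i = {(p,t) : tlo ≤ t ≤ thi ∧ p = pbar + (t − tlo)·v}`. -/
theorem perspective_characterization
    (tlo thi : ℝ) (htw : tlo ≤ thi) (pbar v : Plane)
    (y : ℝ) (hy : y = 0 ∨ y = 1) (zp : Plane) (zt : ℝ) :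
    (y * tlo ≤ zt ∧ zt ≤ y * thi ∧ zp = zt • v + y • (pbar - tlo • v)) ↔
      (∃ (p : Plane) (t : ℝ),
        (tlo ≤ t ∧ t ≤ thi ∧ p = pbar + (t - tlo) • v) ∧ zp = y • p ∧ zt = y * t) :=
  perspective_iff htw pbar v (by rcases hy with rfl | rfl <;> norm_num) zp zt

end
end

section
/- The baseline formulation and the nonconvex formulation have the same optimal objective value: the infimum of Σ_{k ∈ V_agt} Σ_{e ∈ E} l_{e,k} over feasible points of the baseline formulation equals the infimum of Σ_{k ∈ V_agt} Σ_{e ∈ E} l_{e,k} over feasible points of the nonconvex formulation. -/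
/-
On an edge with `y = 1` both formulations impose the same speed and distance constraints on
the visit times. On an edge with `y = 0` the nonconvex speed constraint forces `l = 0`, while
in the baseline the big-M terms `T (1 - y)` and `R (1 - y)` switch the constraints off, because
all time windows lie in `[0, T]` and all reachable positions are within distance `R`. So a
nonconvex point is a baseline point of the same cost, and a baseline point becomes a nonconvex
point of no larger cost after setting `l = 0` on its unused edges.
-/

open scoped BigOperators Classical

noncomputable section

variable {ι υ : Type*} [Fintype ι] [Fintype υ]

variable {ι υ : Type*} [Fintype ι] [Fintype υ]

/-- A point of the baseline formulation: edge variables `y`, `l`, `lbar`, `lxy` for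
each edge and agent, and visit-time variables `t` for each node and agent. -/
structure BasePoint (ι : Type*) (m : ℕ) where
  y : Node ι × Node ι → Fin m → ℝ
  l : Node ι × Node ι → Fin m → ℝ
  lbar : Node ι × Node ι → Fin m → ℝ
  lxy : Node ι × Node ι → Fin m → Plane
  t : Node ι → Fin m → ℝ

/-- Feasibility for the baseline (big-M) formulation, with time horizon `T` and
big-M distance constant `R`. -/
def BaseFeas (D : MTData ι υ) (T R : ℝ) (P : BasePoint ι D.m) : Prop :=
  (∀ e ∈ edges D, ∀ k, P.y e k = 0 ∨ P.y e k = 1) ∧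
  (∀ e ∈ edges D, ∀ k, 0 ≤ P.l e k) ∧
  (∀ e ∈ edges D, ∀ k, 0 ≤ P.lbar e k) ∧
  (∀ k, ∑ e ∈ outE D (Sum.inr false), P.y e k ≤ 1) ∧
  (∀ k, ∑ e ∈ inE D (Sum.inr true), P.y e k ≤ 1) ∧
  (∀ u : υ, ∑ k, ∑ i ∈ Finset.univ.filter (fun i => D.cl i = u),
      ∑ e ∈ inE D (Sum.inl i), P.y e k = 1) ∧
  (∀ i : ι, ∀ k, ∑ e ∈ inE D (Sum.inl i), P.y e k = ∑ e ∈ outE D (Sum.inl i), P.y e k) ∧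
  (∀ i : Node ι, ∀ k, D.tlo i ≤ P.t i k ∧ P.t i k ≤ D.thi i) ∧
  (∀ e ∈ edges D, ∀ k,
    P.l e k ≤ D.vmax * (P.t e.2 k - P.t e.1 k + T * (1 - P.y e k)) ∧
    P.lxy e k = (D.pos e.2 + (P.t e.2 k - D.tlo e.2) • D.vel e.2)
      - (D.pos e.1 + (P.t e.1 k - D.tlo e.1) • D.vel e.1) ∧
    P.lbar e k = P.l e k + R * (1 - P.y e k) ∧
    ‖P.lxy e k‖ ^ 2 ≤ P.lbar e k ^ 2)

/-- Objective of the baseline formulation. -/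
def BaseObj (D : MTData ι υ) (P : BasePoint ι D.m) : ℝ :=
  ∑ k, ∑ e ∈ edges D, P.l e k

section EdgeConstraints

variable {E : Type*} [SeminormedAddCommGroup E] [NormedSpace ℝ E]

lemma bigM_edge_of_bilinear_edge {y l v T R tᵢ tⱼ : ℝ} {pᵢ pⱼ : E} (hy : y = 0 ∨ y = 1)
    (hl : 0 ≤ l) (hv : 0 ≤ v) (hslack : 0 ≤ tⱼ - tᵢ + T) (hdist : ‖pⱼ - pᵢ‖ ≤ R)
    (hspeed : l ≤ v * (y * tⱼ - y * tᵢ)) (hlen : ‖y • pⱼ - y • pᵢ‖ ^ 2 ≤ l ^ 2) :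
    l ≤ v * (tⱼ - tᵢ + T * (1 - y)) ∧ 0 ≤ l + R * (1 - y) ∧
      ‖pⱼ - pᵢ‖ ^ 2 ≤ (l + R * (1 - y)) ^ 2 := by
  rcases hy with rfl | rfl
  · have hl0 : l = 0 := le_antisymm (by simpa using hspeed) hl
    subst hl0
    have hR : 0 ≤ R := (norm_nonneg _).trans hdist
    simp only [sub_zero, mul_one, zero_add]
    exact ⟨mul_nonneg hv hslack, hR, pow_le_pow_left₀ (norm_nonneg _) hdist 2⟩
  · simp only [one_mul, one_smul, sub_self, mul_zero, add_zero] at hspeed hlen ⊢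
    exact ⟨hspeed, hl, hlen⟩

lemma bilinear_edge_of_bigM_edge {y l v T R tᵢ tⱼ : ℝ} {pᵢ pⱼ : E} (hy : y = 0 ∨ y = 1)
    (hspeed : l ≤ v * (tⱼ - tᵢ + T * (1 - y)))
    (hlen : ‖pⱼ - pᵢ‖ ^ 2 ≤ (l + R * (1 - y)) ^ 2) :
    y * l ≤ v * (y * tⱼ - y * tᵢ) ∧ ‖y • pⱼ - y • pᵢ‖ ^ 2 ≤ (y * l) ^ 2 := by
  rcases hy with rfl | rfl
  · simp
  · simp only [one_mul, one_smul, sub_self, mul_zero, add_zero] at hspeed hlen ⊢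
    exact ⟨hspeed, hlen⟩

end EdgeConstraints

lemma exists_baseFeas_of_ncFeas {ι υ : Type*} [Fintype ι] (D : MTData ι υ) {T R : ℝ}
    (hTlo : ∀ i : Node ι, 0 ≤ D.tlo i) (hThi : ∀ i : Node ι, D.thi i ≤ T)
    (hRbound : ∀ i j : Node ι, ∀ (p q : Plane) (t t' : ℝ),
      (D.tlo i ≤ t ∧ t ≤ D.thi i ∧ p = D.pos i + (t - D.tlo i) • D.vel i) →
      (D.tlo j ≤ t' ∧ t' ≤ D.thi j ∧ q = D.pos j + (t' - D.tlo j) • D.vel j) →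
      ‖p - q‖ ≤ R)
    {P : NCPoint ι D.m} (hP : NCFeas D P) :
    ∃ B : BasePoint ι D.m, BaseFeas D T R B ∧ BaseObj D B = NCObj D P := by
  obtain ⟨hy, hl, hs, hs', hcover, hflow, ht, hp, hedge⟩ := hP
  refine ⟨⟨P.y, P.l, fun e k => P.l e k + R * (1 - P.y e k),
    fun e k => P.p e.2 k - P.p e.1 k, P.t⟩, ?_, rfl⟩
  have hbigM : ∀ e ∈ edges D, ∀ k,
      P.l e k ≤ D.vmax * (P.t e.2 k - P.t e.1 k + T * (1 - P.y e k)) ∧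
        0 ≤ P.l e k + R * (1 - P.y e k) ∧
        ‖P.p e.2 k - P.p e.1 k‖ ^ 2 ≤ (P.l e k + R * (1 - P.y e k)) ^ 2 := by
    intro e he k
    obtain ⟨hzp, hzt, hzp', hzt', hspeed, hlxy, hlen⟩ := hedge e he k
    have hslack : 0 ≤ P.t e.2 k - P.t e.1 k + T := by
      linarith [(ht e.1 k).2, (ht e.2 k).1, hTlo e.2, hThi e.1]
    have hdist : ‖P.p e.2 k - P.p e.1 k‖ ≤ R :=
      hRbound e.2 e.1 _ _ _ _ ⟨(ht e.2 k).1, (ht e.2 k).2, hp e.2 k⟩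
        ⟨(ht e.1 k).1, (ht e.1 k).2, hp e.1 k⟩
    rw [hzt, hzt'] at hspeed
    rw [hlxy, hzp, hzp'] at hlen
    exact bigM_edge_of_bilinear_edge (hy e he k) (hl e he k) D.vmax_pos.le hslack hdist
      hspeed hlen
  refine ⟨hy, hl, fun e he k => (hbigM e he k).2.1, hs, hs', hcover, hflow, ht,
    fun e he k => ⟨(hbigM e he k).1, ?_, rfl, (hbigM e he k).2.2⟩⟩
  simp only [hp]

lemma exists_ncFeas_le_of_baseFeas {ι υ : Type*} [Fintype ι] (D : MTData ι υ) {T R : ℝ}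
    {P : BasePoint ι D.m} (hP : BaseFeas D T R P) :
    ∃ Q : NCPoint ι D.m, NCFeas D Q ∧ NCObj D Q ≤ BaseObj D P := by
  obtain ⟨hy, hl, -, hs, hs', hcover, hflow, ht, hedge⟩ := hP
  set p : Node ι → Fin D.m → Plane := fun i k => D.pos i + (P.t i k - D.tlo i) • D.vel i
  have hbilinear : ∀ e ∈ edges D, ∀ k,
      P.y e k * P.l e k ≤ D.vmax * (P.y e k * P.t e.2 k - P.y e k * P.t e.1 k) ∧
        ‖P.y e k • p e.2 k - P.y e k • p e.1 k‖ ^ 2 ≤ (P.y e k * P.l e k) ^ 2 := by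
    intro e he k
    obtain ⟨hspeed, hlxy, hlbar, hlen⟩ := hedge e he k
    rw [hlbar, hlxy] at hlen
    exact bilinear_edge_of_bigM_edge (hy e he k) hspeed hlen
  refine ⟨⟨P.y, fun e k => P.y e k * P.l e k,
    fun e k => P.y e k • p e.2 k - P.y e k • p e.1 k,
    fun e k => P.y e k • p e.1 k, fun e k => P.y e k * P.t e.1 k,
    fun e k => P.y e k • p e.2 k, fun e k => P.y e k * P.t e.2 k, P.t, p⟩, ?_, ?_⟩
  · refine ⟨hy, fun e he k => ?_, hs, hs', hcover, hflow, ht, fun i k => rfl,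
      fun e he k => ⟨rfl, rfl, rfl, rfl, (hbilinear e he k).1, rfl, (hbilinear e he k).2⟩⟩
    rcases hy e he k with h | h <;> simp [h, hl e he k]
  · refine Finset.sum_le_sum fun k _ => Finset.sum_le_sum fun e he => ?_
    rcases hy e he k with h | h <;> simp [h, hl e he k]

theorem baseline_optimal_value_eq_nonconvex_optimal_value_general
    {ι υ : Type*} [Fintype ι] (D : MTData ι υ) (T R : ℝ)
    (hTlo : ∀ i : Node ι, 0 ≤ D.tlo i) (hThi : ∀ i : Node ι, D.thi i ≤ T)
    (hRbound : ∀ i j : Node ι, ∀ (p q : Plane) (t t' : ℝ),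
      (D.tlo i ≤ t ∧ t ≤ D.thi i ∧ p = D.pos i + (t - D.tlo i) • D.vel i) →
      (D.tlo j ≤ t' ∧ t' ≤ D.thi j ∧ q = D.pos j + (t' - D.tlo j) • D.vel j) →
      ‖p - q‖ ≤ R) :
    sInf {c : ℝ | ∃ P : BasePoint ι D.m, BaseFeas D T R P ∧ BaseObj D P = c} =
      sInf {c : ℝ | ∃ P : NCPoint ι D.m, NCFeas D P ∧ NCObj D P = c} := by
  refine csInf_eq_csInf_of_forall_exists_le ?_ ?_
  · rintro _ ⟨P, hP, rfl⟩
    obtain ⟨Q, hQ, hle⟩ := exists_ncFeas_le_of_baseFeas D hP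
    exact ⟨_, ⟨Q, hQ, rfl⟩, hle⟩
  · rintro _ ⟨P, hP, rfl⟩
    obtain ⟨B, hB, heq⟩ := exists_baseFeas_of_ncFeas D hTlo hThi hRbound hP
    exact ⟨_, ⟨B, hB, rfl⟩, heq.le⟩

/-- The baseline (big-M) formulation and the nonconvex formulation
have the same optimal objective value, for any time horizon `T > 0` containing all
time windows, and any `R > 0` bounding the distance between any two positions
attainable on the trajectory segments. -/
theorem baseline_optimal_value_eq_nonconvex_optimal_value
    {ι υ : Type*} [Fintype ι] [Fintype υ] (D : MTData ι υ) (T R : ℝ)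
    (hT : 0 < T) (hTlo : ∀ i : Node ι, 0 ≤ D.tlo i) (hThi : ∀ i : Node ι, D.thi i ≤ T)
    (hR : 0 < R)
    (hRbound : ∀ i j : Node ι, ∀ (p q : Plane) (t t' : ℝ),
      (D.tlo i ≤ t ∧ t ≤ D.thi i ∧ p = D.pos i + (t - D.tlo i) • D.vel i) →
      (D.tlo j ≤ t' ∧ t' ≤ D.thi j ∧ q = D.pos j + (t' - D.tlo j) • D.vel j) →
      ‖p - q‖ ≤ R) :
    sInf {c : ℝ | ∃ P : BasePoint ι D.m, BaseFeas D T R P ∧ BaseObj D P = c} =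
      sInf {c : ℝ | ∃ P : NCPoint ι D.m, NCFeas D P ∧ NCObj D P = c} :=
  baseline_optimal_value_eq_nonconvex_optimal_value_general D T R hTlo hThi hRbound

end
end

section
/- Tightness of the edge costs at optimality in the MICP formulation: if a feasible point of the MICP formulation has l_e > ‖l^{xy}_e‖ for some edge e, then the point obtained from it by replacing l_e with ‖l^{xy}_e‖ (all other variables unchanged) is again feasible for the MICP formulation and has strictly smaller objective value. Consequently, every optimal solution of the MICP formulation satisfies l_e = ‖l^{xy}_e‖ = ‖z′_{e,p} − z_{e,p}‖ for every edge e ∈ E. -/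
open scoped BigOperators Classical

noncomputable section

variable {ι υ : Type*} [Fintype ι] [Fintype υ]

variable {ι υ : Type*} [Fintype ι] [Fintype υ]

/-! The cost `l_e` enters the constraints only through `0 ≤ l_e`, the speed bound
`l_e ≤ v_max (z'_{e,t} − z_{e,t})` and the cone constraint `‖l^{xy}_e‖ ≤ l_e`; all three
survive lowering `l_e` to `‖l^{xy}_e‖ ≥ 0`, while the objective is strictly increasing in
each `l_e`. -/

section CostTightening

variable {ι υ : Type*} [Fintype ι] {D : MTData ι υ}

def MICPPoint.withCost [DecidableEq ι] (Q : MICPPoint ι) (e : Node ι × Node ι) (c : ℝ) :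
    MICPPoint ι :=
  { Q with l := Function.update Q.l e c }

theorem MICPFeas.norm_lxy_le_l {Q : MICPPoint ι} (hQ : MICPFeas D Q) {e : Node ι × Node ι}
    (he : e ∈ edges D) : ‖Q.lxy e‖ ≤ Q.l e := by
  obtain ⟨-, hl, -, -, -, -, -, -, -, -, hedge⟩ := hQ
  obtain ⟨-, -, -, -, -, -, -, -, hcone⟩ := hedge e he
  exact (pow_le_pow_iff_left₀ (norm_nonneg _) (hl e he) two_ne_zero).1 hcone

theorem MICPFeas.lxy_eq {Q : MICPPoint ι} (hQ : MICPFeas D Q) {e : Node ι × Node ι}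
    (he : e ∈ edges D) : Q.lxy e = Q.zp' e - Q.zp e := by
  obtain ⟨-, -, -, -, -, -, -, -, -, -, hedge⟩ := hQ
  obtain ⟨-, -, -, -, -, -, -, hlxy, -⟩ := hedge e he
  exact hlxy

theorem MICPFeas.with_l_of_norm_le_of_le {Q : MICPPoint ι} (hQ : MICPFeas D Q)
    {l' : Node ι × Node ι → ℝ} (hl' : ∀ f ∈ edges D, ‖Q.lxy f‖ ≤ l' f ∧ l' f ≤ Q.l f) :
    MICPFeas D { Q with l := l' } := by
  obtain ⟨hy, -, hα, hα1, hαm, hs, hs', hcl, hflow, htime, hedge⟩ := hQ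
  refine ⟨hy, fun f hf => (norm_nonneg _).trans (hl' f hf).1, hα, hα1, hαm, hs, hs', hcl,
    hflow, htime, fun f hf => ?_⟩
  obtain ⟨h1, h2, h3, h4, h5, h6, hspeed, hlxy, -⟩ := hedge f hf
  exact ⟨h1, h2, h3, h4, h5, h6, (hl' f hf).2.trans hspeed, hlxy,
    pow_le_pow_left₀ (norm_nonneg _) (hl' f hf).1 2⟩

variable [DecidableEq ι]

theorem MICPFeas.withCost {Q : MICPPoint ι} (hQ : MICPFeas D Q) {e : Node ι × Node ι}
    {c : ℝ} (hc_ge : ‖Q.lxy e‖ ≤ c) (hc_le : c ≤ Q.l e) : MICPFeas D (Q.withCost e c) := by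
  refine hQ.with_l_of_norm_le_of_le fun f hf => ?_
  rcases eq_or_ne f e with rfl | hfe
  · simpa using ⟨hc_ge, hc_le⟩
  · simpa [hfe] using hQ.norm_lxy_le_l hf

theorem MICPObj_withCost_lt {Q : MICPPoint ι} {e : Node ι × Node ι} (he : e ∈ edges D)
    {c : ℝ} (hc : c < Q.l e) : MICPObj D (Q.withCost e c) < MICPObj D Q :=
  Finset.sum_lt_sum (fun f _ => update_le_self_iff.2 hc.le f)
    ⟨e, he, by simpa [MICPPoint.withCost] using hc⟩

end CostTightening

theorem micp_edge_costs_tight_at_optimality_general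
    {ι υ : Type*} [Fintype ι] [DecidableEq ι] (D : MTData ι υ) :
    (∀ (Q : MICPPoint ι) (e : Node ι × Node ι), MICPFeas D Q → e ∈ edges D →
      ‖Q.lxy e‖ < Q.l e →
      MICPFeas D { Q with l := Function.update Q.l e ‖Q.lxy e‖ } ∧
      MICPObj D { Q with l := Function.update Q.l e ‖Q.lxy e‖ } < MICPObj D Q) ∧
    (∀ Q : MICPPoint ι, MICPFeas D Q →
      (∀ Q' : MICPPoint ι, MICPFeas D Q' → MICPObj D Q ≤ MICPObj D Q') →
      ∀ e ∈ edges D, Q.l e = ‖Q.lxy e‖ ∧ ‖Q.lxy e‖ = ‖Q.zp' e - Q.zp e‖) := by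
  have tighten : ∀ (Q : MICPPoint ι) (e : Node ι × Node ι), MICPFeas D Q → e ∈ edges D →
      ‖Q.lxy e‖ < Q.l e → MICPFeas D (Q.withCost e ‖Q.lxy e‖) ∧
        MICPObj D (Q.withCost e ‖Q.lxy e‖) < MICPObj D Q :=
    fun Q e hQ he hlt => ⟨hQ.withCost le_rfl hlt.le, MICPObj_withCost_lt he hlt⟩
  refine ⟨tighten, fun Q hQ hopt e he => ⟨?_, by rw [hQ.lxy_eq he]⟩⟩
  refine (hQ.norm_lxy_le_l he).antisymm' (not_lt.1 fun hlt => ?_)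
  obtain ⟨hfeas, hdecrease⟩ := tighten Q e hQ he hlt
  exact (hopt _ hfeas).not_gt hdecrease

/-- **tightness of the edge costs at optimality, MICP formulation.**
If a feasible point of the MICP has `l_e > ‖lxy_e‖` for some edge `e`, then replacing
`l_e` by `‖lxy_e‖` (all other variables unchanged) yields a feasible point with
strictly smaller objective value.  Consequently every optimal solution of the MICP
satisfies `l_e = ‖lxy_e‖ = ‖z'_{e,p} − z_{e,p}‖` for every edge `e`. -/
theorem micp_edge_costs_tight_at_optimality
    {ι υ : Type*} [Fintype ι] [Fintype υ] [DecidableEq ι] (D : MTData ι υ) :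
    (∀ (Q : MICPPoint ι) (e : Node ι × Node ι), MICPFeas D Q → e ∈ edges D →
      ‖Q.lxy e‖ < Q.l e →
      MICPFeas D { Q with l := Function.update Q.l e ‖Q.lxy e‖ } ∧
      MICPObj D { Q with l := Function.update Q.l e ‖Q.lxy e‖ } < MICPObj D Q) ∧
    (∀ Q : MICPPoint ι, MICPFeas D Q →
      (∀ Q' : MICPPoint ι, MICPFeas D Q' → MICPObj D Q ≤ MICPObj D Q') →
      ∀ e ∈ edges D, Q.l e = ‖Q.lxy e‖ ∧ ‖Q.lxy e‖ = ‖Q.zp' e - Q.zp e‖) :=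
  micp_edge_costs_tight_at_optimality_general D

end
end

section
/- Tightness of the edge costs at optimality in the nonconvex formulation: if a feasible point of the nonconvex formulation has l_{e,k} > ‖l^{xy}_{e,k}‖ for some edge e and agent k, then the point obtained from it by replacing l_{e,k} with ‖l^{xy}_{e,k}‖ (all other variables unchanged) is again feasible for the nonconvex formulation and has strictly smaller objective value. Consequently, every optimal solution of the nonconvex formulation satisfies l_{e,k} = ‖l^{xy}_{e,k}‖ = y_{e,k}·‖p_{j,k} − p_{i,k}‖ for every edge e = (i,j) ∈ E and every agent k. -/
open scoped BigOperators Classical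

noncomputable section

variable {ι υ : Type*} [Fintype ι] [Fintype υ]

variable {ι υ : Type*} [Fintype ι] [Fintype υ]

/-! Lowering a cost `l_{e,k}` towards `‖l^{xy}_{e,k}‖` keeps the cone constraint and only
loosens the speed constraint `l_{e,k} ≤ v_max (z'_{e,k,t} - z_{e,k,t})`, while it decreases the
objective; hence the cone constraint is tight at an optimum. Since `y_{e,k} ∈ {0, 1}`,
`l^{xy}_{e,k} = y_{e,k} (p_{j,k} - p_{i,k})` has norm `y_{e,k} ‖p_{j,k} - p_{i,k}‖`. -/

namespace NCPoint

variable {ι : Type*} {m : ℕ}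

def tightenCost (P : NCPoint ι m) (e : Node ι × Node ι) (k : Fin m) : NCPoint ι m :=
  { P with l := fun e' k' => if e' = e ∧ k' = k then ‖P.lxy e k‖ else P.l e' k' }

end NCPoint

namespace NCFeas

variable {ι υ : Type*} [Fintype ι] {D : MTData ι υ} {P : NCPoint ι D.m}

theorem norm_lxy_le_l (hP : NCFeas D P) {e : Node ι × Node ι} (he : e ∈ edges D)
    (k : Fin D.m) : ‖P.lxy e k‖ ≤ P.l e k :=
  (sq_le_sq₀ (norm_nonneg _) (hP.2.1 e he k)).1 (hP.2.2.2.2.2.2.2.2 e he k).2.2.2.2.2.2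

theorem norm_lxy_eq (hP : NCFeas D P) {e : Node ι × Node ι} (he : e ∈ edges D)
    (k : Fin D.m) : ‖P.lxy e k‖ = P.y e k * ‖P.p e.2 k - P.p e.1 k‖ := by
  obtain ⟨hzp, -, hzp', -, -, hlxy, -⟩ := hP.2.2.2.2.2.2.2.2 e he k
  have hy : 0 ≤ P.y e k := by rcases hP.1 e he k with h | h <;> simp [h]
  rw [hlxy, hzp', hzp, ← smul_sub, norm_smul, Real.norm_of_nonneg hy]

theorem with_l (hP : NCFeas D P) {l : Node ι × Node ι → Fin D.m → ℝ}
    (hl : ∀ e ∈ edges D, ∀ k, ‖P.lxy e k‖ ≤ l e k ∧ l e k ≤ P.l e k) :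
    NCFeas D { P with l := l } := by
  obtain ⟨hy, -, hs, hs', hcover, hflow, ht, hp, hedge⟩ := hP
  refine ⟨hy, fun e he k => (norm_nonneg _).trans (hl e he k).1, hs, hs', hcover, hflow, ht, hp,
    fun e he k => ?_⟩
  obtain ⟨hzp, hzt, hzp', hzt', hspeed, hlxy, -⟩ := hedge e he k
  obtain ⟨hlo, hhi⟩ := hl e he k
  exact ⟨hzp, hzt, hzp', hzt', hhi.trans hspeed, hlxy, pow_le_pow_left₀ (norm_nonneg _) hlo 2⟩

theorem tightenCost_bounds (hP : NCFeas D P) {e : Node ι × Node ι} {k : Fin D.m}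
    (hle : ‖P.lxy e k‖ ≤ P.l e k) :
    ∀ e' ∈ edges D, ∀ k', ‖P.lxy e' k'‖ ≤ (P.tightenCost e k).l e' k' ∧
      (P.tightenCost e k).l e' k' ≤ P.l e' k' := by
  intro e' he' k'
  simp only [NCPoint.tightenCost]
  split_ifs with h
  · obtain ⟨rfl, rfl⟩ := h
    exact ⟨le_rfl, hle⟩
  · exact ⟨hP.norm_lxy_le_l he' k', le_rfl⟩

theorem tightenCost (hP : NCFeas D P) {e : Node ι × Node ι} {k : Fin D.m}
    (hle : ‖P.lxy e k‖ ≤ P.l e k) : NCFeas D (P.tightenCost e k) :=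
  hP.with_l (hP.tightenCost_bounds hle)

theorem NCObj_tightenCost_lt (hP : NCFeas D P) {e : Node ι × Node ι} (he : e ∈ edges D)
    {k : Fin D.m} (hlt : ‖P.lxy e k‖ < P.l e k) : NCObj D (P.tightenCost e k) < NCObj D P := by
  have hle e' he' k' := (hP.tightenCost_bounds hlt.le e' he' k').2
  refine Finset.sum_lt_sum (fun k' _ => Finset.sum_le_sum fun e' he' => hle e' he' k')
    ⟨k, Finset.mem_univ k, Finset.sum_lt_sum (fun e' he' => hle e' he' k) ⟨e, he, ?_⟩⟩
  simpa [NCPoint.tightenCost] using hlt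

theorem l_eq_norm_lxy_of_optimal (hP : NCFeas D P)
    (hopt : ∀ P' : NCPoint ι D.m, NCFeas D P' → NCObj D P ≤ NCObj D P')
    {e : Node ι × Node ι} (he : e ∈ edges D) (k : Fin D.m) : P.l e k = ‖P.lxy e k‖ :=
  le_antisymm (not_lt.1 fun hlt => (hopt _ (hP.tightenCost hlt.le)).not_gt
    (hP.NCObj_tightenCost_lt he hlt)) (hP.norm_lxy_le_l he k)

end NCFeas

theorem nonconvex_edge_costs_tight_at_optimality_general
    {ι υ : Type*} [Fintype ι] (D : MTData ι υ) :
    (∀ (P : NCPoint ι D.m) (e : Node ι × Node ι) (k : Fin D.m),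
      NCFeas D P → e ∈ edges D → ‖P.lxy e k‖ < P.l e k →
      NCFeas D { P with l := fun e' k' =>
          if e' = e ∧ k' = k then ‖P.lxy e k‖ else P.l e' k' } ∧
      NCObj D { P with l := fun e' k' =>
          if e' = e ∧ k' = k then ‖P.lxy e k‖ else P.l e' k' } < NCObj D P) ∧
    (∀ P : NCPoint ι D.m, NCFeas D P →
      (∀ P' : NCPoint ι D.m, NCFeas D P' → NCObj D P ≤ NCObj D P') →
      ∀ e ∈ edges D, ∀ k,
        P.l e k = ‖P.lxy e k‖ ∧ ‖P.lxy e k‖ = P.y e k * ‖P.p e.2 k - P.p e.1 k‖) :=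
  ⟨fun _ _ _ hP he hlt => ⟨hP.tightenCost hlt.le, hP.NCObj_tightenCost_lt he hlt⟩,
    fun _ hP hopt _ he k => ⟨hP.l_eq_norm_lxy_of_optimal hopt he k, hP.norm_lxy_eq he k⟩⟩

/-- **tightness of the edge costs at optimality, nonconvex
formulation.**  If a feasible point of the nonconvex formulation has
`l_{e,k} > ‖lxy_{e,k}‖` for some edge `e` and agent `k`, then replacing `l_{e,k}` by
`‖lxy_{e,k}‖` (all other variables unchanged) yields a feasible point with strictly
smaller objective value.  Consequently every optimal solution satisfies
`l_{e,k} = ‖lxy_{e,k}‖ = y_{e,k}·‖p_{j,k} − p_{i,k}‖` for every edge `e = (i,j)` and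
every agent `k`. -/
theorem nonconvex_edge_costs_tight_at_optimality
    {ι υ : Type*} [Fintype ι] [Fintype υ] (D : MTData ι υ) :
    (∀ (P : NCPoint ι D.m) (e : Node ι × Node ι) (k : Fin D.m),
      NCFeas D P → e ∈ edges D → ‖P.lxy e k‖ < P.l e k →
      NCFeas D { P with l := fun e' k' =>
          if e' = e ∧ k' = k then ‖P.lxy e k‖ else P.l e' k' } ∧
      NCObj D { P with l := fun e' k' =>
          if e' = e ∧ k' = k then ‖P.lxy e k‖ else P.l e' k' } < NCObj D P) ∧
    (∀ P : NCPoint ι D.m, NCFeas D P →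
      (∀ P' : NCPoint ι D.m, NCFeas D P' → NCObj D P ≤ NCObj D P') →
      ∀ e ∈ edges D, ∀ k,
        P.l e k = ‖P.lxy e k‖ ∧ ‖P.lxy e k‖ = P.y e k * ‖P.p e.2 k - P.p e.1 k‖) :=
  nonconvex_edge_costs_tight_at_optimality_general D

end
end

section
/- Consistency of times and positions along consecutive selected edges in the MICP formulation: let a feasible point of the MICP formulation be given, let j be a segment node, and let e = (i, j) ∈ E and f = (j, k′) ∈ E be edges with y_e = 1 and y_f = 1. Then z′_{e,t} = z_{f,t} and z′_{e,p} = z_{f,p}. -/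
open scoped BigOperators Classical

noncomputable section

variable {ι υ : Type*} [Fintype ι] [Fintype υ]

variable {ι υ : Type*} [Fintype ι] [Fintype υ]

/-- **consistency of times and positions along consecutive selected
edges in the MICP formulation.**  Given a feasible point of the MICP, a segment node
`j`, and edges `e = (i, j)` and `f = (j, k')` of `E` with `y_e = 1` and `y_f = 1`, the
arrival variables of `e` agree with the departure variables of `f`:
`z'_{e,t} = z_{f,t}` and `z'_{e,p} = z_{f,p}`. -/
theorem consecutive_selected_edges_consistent
    {ι υ : Type*} [Fintype ι] [Fintype υ] (D : MTData ι υ)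
    (Q : MICPPoint ι) (hQ : MICPFeas D Q)
    (j : ι) (i k' : Node ι)
    (he : (i, Sum.inl j) ∈ edges D) (hf : ((Sum.inl j : Node ι), k') ∈ edges D)
    (hye : Q.y (i, Sum.inl j) = 1) (hyf : Q.y (Sum.inl j, k') = 1) :
    Q.zt' (i, Sum.inl j) = Q.zt (Sum.inl j, k') ∧
    Q.zp' (i, Sum.inl j) = Q.zp (Sum.inl j, k') := by
  classical
  obtain ⟨hy01, hl0, -, -, -, -, -, hclu, hflow, hztc, hedge⟩ := hQ
  set e : Node ι × Node ι := (i, Sum.inl j) with hedef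
  set f : Node ι × Node ι := (Sum.inl j, k') with hfdef
  have hynn : ∀ g ∈ edges D, 0 ≤ Q.y g := by
    intro g hg
    rcases hy01 g hg with h | h <;> rw [h] <;> norm_num
  have hin_sub : inE D (Sum.inl j) ⊆ edges D := Finset.filter_subset _ _
  have hout_sub : outE D (Sum.inl j) ⊆ edges D := Finset.filter_subset _ _
  have hein : e ∈ inE D (Sum.inl j) := by
    simp [inE, he]
    exact rfl
  have hfout : f ∈ outE D (Sum.inl j) := by
    simp [outE, hf]
    exact rfl
  -- F i' := sum of y over edges into node i'
  set F : ι → ℝ := fun i' => ∑ g ∈ inE D (Sum.inl i'), Q.y g with hF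
  have hFnn : ∀ i', 0 ≤ F i' :=
    fun i' => Finset.sum_nonneg fun g hg => hynn g (Finset.filter_subset _ _ hg)
  have hjmem : j ∈ Finset.univ.filter (fun i' => D.cl i' = D.cl j) := by simp
  have hFj_le : F j ≤ 1 := by
    have := hclu (D.cl j)
    calc F j ≤ ∑ i' ∈ Finset.univ.filter (fun i' => D.cl i' = D.cl j),
        F i' := Finset.single_le_sum (fun i' _ => hFnn i') hjmem
      _ = 1 := this
  have hrest : ∑ g ∈ (inE D (Sum.inl j)).erase e, Q.y g = 0 := by
    have hsplit : Q.y e + ∑ g ∈ (inE D (Sum.inl j)).erase e, Q.y g = F j :=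
      Finset.add_sum_erase _ _ hein
    have hrnn : 0 ≤ ∑ g ∈ (inE D (Sum.inl j)).erase e, Q.y g :=
      Finset.sum_nonneg fun g hg =>
        hynn g (hin_sub (Finset.mem_of_mem_erase hg))
    have : Q.y e + ∑ g ∈ (inE D (Sum.inl j)).erase e, Q.y g ≤ 1 :=
      hsplit ▸ hFj_le
    rw [hye] at this
    linarith
  have hyin0 : ∀ g ∈ inE D (Sum.inl j), g ≠ e → Q.y g = 0 := by
    intro g hg hne
    have := (Finset.sum_eq_zero_iff_of_nonneg
      (fun g hg => hynn g (hin_sub (Finset.mem_of_mem_erase hg)))).mp hrest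
    exact this g (Finset.mem_erase.mpr ⟨hne, hg⟩)
  have hFj1 : F j = 1 := by
    have hsplit : Q.y e + ∑ g ∈ (inE D (Sum.inl j)).erase e, Q.y g = F j :=
      Finset.add_sum_erase _ _ hein
    rw [← hsplit, hye, hrest]; ring
  have hout1 : ∑ g ∈ outE D (Sum.inl j), Q.y g = 1 := by
    rw [← hflow j]; exact hFj1
  have hrestout : ∑ g ∈ (outE D (Sum.inl j)).erase f, Q.y g = 0 := by
    have hsplit : Q.y f + ∑ g ∈ (outE D (Sum.inl j)).erase f, Q.y g
        = ∑ g ∈ outE D (Sum.inl j), Q.y g := Finset.add_sum_erase _ _ hfout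
    rw [hout1, hyf] at hsplit
    linarith
  have hyout0 : ∀ g ∈ outE D (Sum.inl j), g ≠ f → Q.y g = 0 := by
    intro g hg hne
    have := (Finset.sum_eq_zero_iff_of_nonneg
      (fun g hg => hynn g (hout_sub (Finset.mem_of_mem_erase hg)))).mp hrestout
    exact this g (Finset.mem_erase.mpr ⟨hne, hg⟩)
  -- zero y forces zero zt', zt
  have hzt'0 : ∀ g ∈ inE D (Sum.inl j), g ≠ e → Q.zt' g = 0 := by
    intro g hg hne
    obtain ⟨-, -, h1, h2, -⟩ := hedge g (hin_sub hg)
    rw [hyin0 g hg hne] at h1 h2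
    simp only [zero_mul] at h1 h2
    linarith
  have hzt0 : ∀ g ∈ outE D (Sum.inl j), g ≠ f → Q.zt g = 0 := by
    intro g hg hne
    obtain ⟨h1, h2, -⟩ := hedge g (hout_sub hg)
    rw [hyout0 g hg hne] at h1 h2
    simp only [zero_mul] at h1 h2
    linarith
  have hzt : Q.zt' e = Q.zt f := by
    have h := hztc j
    rw [Finset.sum_eq_single_of_mem e hein hzt'0,
      Finset.sum_eq_single_of_mem f hfout hzt0] at h
    exact h
  refine ⟨hzt, ?_⟩
  obtain ⟨-, -, -, -, -, hpe, -⟩ := hedge e he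
  obtain ⟨-, -, -, -, hpf, -⟩ := hedge f hf
  rw [hpe, hpf, hye, hyf, hzt]

end
end
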